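/- For the Lie algebra A₄,₁₁^a (a > 0) with brackets [X₂,X₃]=X₁, [X₁,X₄]=2aX₁, [X₂,X₄]=aX₂-X₃, [X₃,X₄]=X₂+aX₃, the form ω(X,Y)=α([X,Y]) with α(X₁)=1, α(X₂)=α(X₃)=α(X₄)=0 is nondegenerate. -/

import Mathlib

/-!
The form `ω(X, Y) = α ⁅X, Y⁆` is alternating, so in a basis of a four-dimensional Lie algebra the
determinant of its Gram matrix is the square of the Pfaffian `ω₁₂ ω₃₄ - ω₁₃ ω₂₄ + ω₁₄ ω₂₃`.
Here `α` kills `⁅X₃, X₄⁆` and `⁅X₂, X₄⁆`, while `ω₁₄ = 2a` and `ω₂₃ = 1`, so the Pfaffian is `2a ≠ 0`.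
-/

theorem Matrix.det_fin_four_of_alternating {R : Type*} [CommRing R] (A : Matrix (Fin 4) (Fin 4) R)
    (hdiag : ∀ i, A i i = 0) (hskew : ∀ i j, A j i = -A i j) :
    A.det = (A 0 1 * A 2 3 - A 0 2 * A 1 3 + A 0 3 * A 1 2) ^ 2 := by
  rw [Matrix.det_succ_row_zero]
  simp only [Fin.sum_univ_succ, Matrix.det_fin_three, Matrix.submatrix_apply]
  simp [Fin.succAbove, hdiag, hskew 1 0, hskew 2 0, hskew 3 0, hskew 2 1, hskew 3 1, hskew 3 2]
  ring

namespace LieAlgebra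

variable (R L : Type*) [CommRing R] [LieRing L] [LieAlgebra R L]

def kirillovForm (α : L →ₗ[R] R) : LinearMap.BilinForm R L :=
  (LieModule.toEnd R L L : L →ₗ[R] Module.End R L).compr₂ α

variable {R L}

@[simp]
theorem kirillovForm_apply (α : L →ₗ[R] R) (x y : L) : kirillovForm R L α x y = α ⁅x, y⁆ := rfl

theorem det_toMatrix₂_kirillovForm_of_fin_four (α : L →ₗ[R] R) (b : Module.Basis (Fin 4) R L) :
    (LinearMap.toMatrix₂ b b (kirillovForm R L α)).det =
      (α ⁅b 0, b 1⁆ * α ⁅b 2, b 3⁆ - α ⁅b 0, b 2⁆ * α ⁅b 1, b 3⁆ + α ⁅b 0, b 3⁆ * α ⁅b 1, b 2⁆) ^ 2 := by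
  rw [Matrix.det_fin_four_of_alternating _ (fun i => by simp) fun i j => by
    rw [LinearMap.toMatrix₂_apply, LinearMap.toMatrix₂_apply, kirillovForm_apply,
      kirillovForm_apply, ← lie_skew (b i) (b j), map_neg, neg_neg]]
  simp only [LinearMap.toMatrix₂_apply, kirillovForm_apply]

end LieAlgebra

theorem stmt_11_general (a : ℝ) (ha : 0 < a)
    (L : Type*) [LieRing L] [LieAlgebra ℝ L]
    (B : Module.Basis (Fin 4) ℝ L)
    (h23 : ⁅B 1, B 2⁆ = B 0) (h14 : ⁅B 0, B 3⁆ = (2 * a) • B 0)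
    (h24 : ⁅B 1, B 3⁆ = a • B 1 - B 2) (h34 : ⁅B 2, B 3⁆ = B 1 + a • B 2)
    (α : L →ₗ[ℝ] ℝ) (hα : ∀ i : Fin 4, α (B i) = if i = 0 then 1 else 0) :
    ∀ X : L, X ≠ 0 → ∃ Y : L, α ⁅X, Y⁆ ≠ 0 := by
  have hpfaffian : α ⁅B 0, B 1⁆ * α ⁅B 2, B 3⁆ - α ⁅B 0, B 2⁆ * α ⁅B 1, B 3⁆
      + α ⁅B 0, B 3⁆ * α ⁅B 1, B 2⁆ = 2 * a := by
    simp [h23, h14, h24, h34, hα]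
  have hω : (LieAlgebra.kirillovForm ℝ L α).SeparatingLeft := by
    apply LinearMap.separatingLeft_of_det_ne_zero B
    rw [LieAlgebra.det_toMatrix₂_kirillovForm_of_fin_four, hpfaffian]
    positivity
  intro X hX
  by_contra! h
  exact hX (hω X h)

/-- For the Lie algebra `A₄,₁₁ᵃ` (`a > 0`) with brackets `⁅X₂,X₃⁆=X₁`,
`⁅X₁,X₄⁆=2aX₁`, `⁅X₂,X₄⁆=aX₂-X₃`, `⁅X₃,X₄⁆=X₂+aX₃` (other basis brackets
zero), the form `(X,Y) ↦ α ⁅X,Y⁆` with `α(X₁)=1`, `α(X₂)=α(X₃)=α(X₄)=0` is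
nondegenerate. -/
theorem stmt_11 (a : ℝ) (ha : 0 < a)
    (L : Type*) [LieRing L] [LieAlgebra ℝ L]
    (B : Module.Basis (Fin 4) ℝ L)
    (h23 : ⁅B 1, B 2⁆ = B 0) (h14 : ⁅B 0, B 3⁆ = (2 * a) • B 0)
    (h24 : ⁅B 1, B 3⁆ = a • B 1 - B 2) (h34 : ⁅B 2, B 3⁆ = B 1 + a • B 2)
    (h12 : ⁅B 0, B 1⁆ = 0) (h13 : ⁅B 0, B 2⁆ = 0)
    (α : L →ₗ[ℝ] ℝ) (hα : ∀ i : Fin 4, α (B i) = if i = 0 then 1 else 0) :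
    ∀ X : L, X ≠ 0 → ∃ Y : L, α ⁅X, Y⁆ ≠ 0 :=
  stmt_11_general a ha L B h23 h14 h24 h34 α hα
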